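/- The cycle matroid of K_n (the count matroid M_{f_{1,1}}(K_n), where f_{1,1}(F) = |V(F)| − 1) is the unique maximal matroid on E(K_n) in which every triangle is a circuit, and its rank function is val_{K₃}. -/

import Mathlib

open Set

variable {α : Type*}

/-- `C` is a circuit of `M`: a minimal dependent subset of the ground set. -/
def Matroid.IsCircuit' (M : Matroid α) (C : Set α) : Prop :=
  C ⊆ M.E ∧ ¬ M.Indep C ∧ ∀ e ∈ C, M.Indep (C \ {e})

/-- `M` is an `X`-matroid on `E`: a matroid with ground set `E` in which every member of the
family `X` is a circuit. -/
def IsXMatroid (E : Set α) (X : Set (Set α)) (M : Matroid α) : Prop :=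
  M.E = E ∧ ∀ C ∈ X, M.IsCircuit' C

/-- The union of a list of sets. -/
def unionList (S : List (Set α)) : Set α := ⋃ Y ∈ S, Y

/-- A proper `X`-sequence: a list of members of `X` such that no term is contained in the
union of the preceding terms. -/
def ProperSeq (X : Set (Set α)) (S : List (Set α)) : Prop :=
  (∀ Y ∈ S, Y ∈ X) ∧
  ∀ i : Fin S.length, 0 < i.1 → ¬ (S.get i ⊆ unionList (S.take i.1))

/-- `val(F, S) = |F ∪ ⋃ S| - |S|`. -/
noncomputable def valSeq (F : Set α) (S : List (Set α)) : ℤ :=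
  ((F ∪ unionList S).ncard : ℤ) - S.length

/-- `val_X(F)`: the minimum of `val(F, S)` over all proper `X`-sequences `S`. -/
noncomputable def valX (X : Set (Set α)) (F : Set α) : ℤ :=
  sInf {v : ℤ | ∃ S : List (Set α), ProperSeq X S ∧ v = valSeq F S}

/-- The rank of a set `F` in a matroid `M`: the largest size of an independent subset of `F`. -/
noncomputable def mrk (M : Matroid α) (F : Set α) : ℕ :=
  sSup {n : ℕ | ∃ I ⊆ F, M.Indep I ∧ I.ncard = n}

/-- The weak order on matroids: `M ⪯ N` iff every independent set of `M` is independent in `N`. -/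
def WeakLE (M N : Matroid α) : Prop := ∀ I : Set α, M.Indep I → N.Indep I

/-- The set of vertices incident to a set of edges. -/
def verts {V : Type*} (F : Set (Sym2 V)) : Set V := {v | ∃ e ∈ F, v ∈ e}

/-- The edge sets of matchings with exactly `k` edges in the complete graph `K_n`. -/
def matchingCopies (n k : ℕ) : Set (Set (Sym2 (Fin n))) :=
  {F | F ⊆ (⊤ : SimpleGraph (Fin n)).edgeSet ∧ F.ncard = k ∧
       ∀ e ∈ F, ∀ f ∈ F, e ≠ f → ∀ v : Fin n, v ∈ e → v ∉ f}
/-- The edge sets of triangles in `K_n`. -/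
def triangleCopies (n : ℕ) : Set (Set (Sym2 (Fin n))) :=
  {F | ∃ x y z : Fin n, x ≠ y ∧ x ≠ z ∧ y ≠ z ∧ F = {s(x, y), s(x, z), s(y, z)}}

/-
Since every triangle is a circuit, in a `K₃`-matroid an edge whose ends are joined by a path lies
in the closure of that path. So a nonempty independent set `J` of a `K₃`-matroid lies in the
closure of a star on `verts J` and has at most `|verts J| - 1` edges, which makes it independent
in the cycle matroid. For the rank, each circuit of a proper sequence brings a new element
without raising the rank, so `r(F) ≤ |F ∪ ⋃ S| - |S|`. Conversely, after choosing a root in each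
component of `F`, the edges to the roots form an independent set spanned by `F`, and the
triangles through the roots on the other edges of the component cliques form a proper sequence
whose value is at most the number of those root edges.
-/

lemma mem_unionList {S : List (Set α)} {x : α} : x ∈ unionList S ↔ ∃ Y ∈ S, x ∈ Y := by
  simp [unionList]

lemma unionList_append_singleton (S : List (Set α)) (C : Set α) :
    unionList (S ++ [C]) = unionList S ∪ C := by
  ext x; simp [mem_unionList, or_and_right, exists_or]

lemma ProperSeq.mono {X Y : Set (Set α)} {S : List (Set α)} (hS : ProperSeq X S) (hXY : X ⊆ Y) :
    ProperSeq Y S :=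
  ⟨fun C hC => hXY (hS.1 C hC), hS.2⟩

lemma ProperSeq.of_append_singleton {X : Set (Set α)} {S : List (Set α)} {C : Set α}
    (hS : ProperSeq X (S ++ [C])) :
    ProperSeq X S ∧ C ∈ X ∧ (S = [] ∨ ¬ C ⊆ unionList S) := by
  refine ⟨⟨fun Y hY => hS.1 Y (by simp [hY]), fun i hi => ?_⟩, hS.1 C (by simp), ?_⟩
  · have := hS.2 ⟨i, by simp⟩ hi
    simpa [List.getElem_append_left i.2, List.take_append_of_le_length i.2.le] using this
  · rcases eq_or_ne S [] with h | h
    · exact .inl h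
    · have := hS.2 ⟨S.length, by simp⟩ (List.length_pos_iff.2 h)
      simpa using Or.inr this

lemma properSeq_map {β : Type*} {X : Set (Set α)} {f : β → Set α} {l : List β} (hl : l.Nodup)
    (hX : ∀ b ∈ l, f b ∈ X) (hpriv : ∀ b ∈ l, ∃ x ∈ f b, ∀ b' ∈ l, x ∈ f b' → b' = b) :
    ProperSeq X (l.map f) := by
  refine ⟨by simpa using hX, fun i hi hsub => ?_⟩
  have hil : i.1 < l.length := by simpa using i.2
  obtain ⟨x, hxf, hx⟩ := hpriv l[i.1] (List.getElem_mem hil)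
  obtain ⟨Y, hY, hxY⟩ := mem_unionList.1 (hsub (by simpa using hxf))
  rw [← List.map_take] at hY
  obtain ⟨b', hb', rfl⟩ := List.mem_map.1 hY
  obtain ⟨j, hj, rfl⟩ := List.mem_take_iff_getElem.1 hb'
  have := hl.getElem_inj_iff.1 (hx _ (List.mem_of_mem_take hb') hxY)
  omega

namespace Matroid

variable {M : Matroid α}

lemma isCircuit'_iff {C : Set α} : M.IsCircuit' C ↔ M.IsCircuit C := by
  rw [isCircuit_iff_dep_forall_sdiff_singleton_indep, dep_iff, IsCircuit']
  tauto

/-- Each circuit of a proper sequence brings a new element lying in the closure of the others,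
so it raises the size of the union by one without raising its rank. -/
lemma eRk_union_unionList_add_length_le {S : List (Set α)}
    (hS : ProperSeq {C | M.IsCircuit C} S) (X : Set α) :
    M.eRk (X ∪ unionList S) + S.length ≤ (X ∪ unionList S).encard := by
  induction S using List.reverseRecOn generalizing X with
  | nil => simpa [unionList] using M.eRk_le_encard X
  | append_singleton S C ih =>
    obtain ⟨hS', hC, hfresh⟩ := hS.of_append_singleton
    obtain ⟨e, heC, heS⟩ : ∃ e ∈ C, e ∉ unionList S := by
      rcases hfresh with rfl | h
      · obtain ⟨e, he⟩ := IsCircuit.nonempty hC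
        exact ⟨e, he, by simp [unionList]⟩
      · exact not_subset.1 h
    set Z := (X ∪ C) \ {e} ∪ unionList S
    have hZ : X ∪ unionList (S ++ [C]) = insert e Z := by
      ext x
      rcases eq_or_ne x e with rfl | hx
      · simp [unionList_append_singleton, heC]
      · simp only [Z, unionList_append_singleton, mem_union, mem_insert_iff, hx, mem_sdiff,
          mem_singleton_iff, not_false_eq_true, and_true, false_or]
        tauto
    have heZ : e ∉ Z := by simp [Z, heS]
    have he : e ∈ M.closure Z := M.closure_subset_closure (fun x hx => .inl ⟨.inr hx.1, hx.2⟩)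
      (hC.mem_closure_sdiff_singleton_of_mem heC)
    have IH := ih hS' ((X ∪ C) \ {e})
    rw [hZ, ← M.eRk_insert_closure_eq, insert_eq_of_mem he, eRk_closure_eq,
      encard_insert_of_notMem heZ, List.length_append, List.length_singleton, Nat.cast_add,
      Nat.cast_one, ← add_assoc]
    gcongr

lemma Indep.encard_le_eRk_of_subset_closure {I X : Set α} (hI : M.Indep I)
    (hIX : I ⊆ M.closure X) : I.encard ≤ M.eRk X := by
  rw [← M.eRk_closure_eq X]
  exact hI.encard_le_eRk_of_subset hIX

end Matroid

section Rank

variable {M : Matroid α} {F : Set α}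

lemma mrk_eq_eRk (hF : F.Finite) : (mrk M F : ℕ∞) = M.eRk F := by
  obtain ⟨I, hI⟩ := M.exists_isBasis' F
  have hIfin : I.Finite := hF.subset hI.subset
  have hmax : IsGreatest {n : ℕ | ∃ J ⊆ F, M.Indep J ∧ J.ncard = n} I.ncard := by
    refine ⟨⟨I, hI.subset, hI.indep, rfl⟩, ?_⟩
    rintro _ ⟨J, hJF, hJ, rfl⟩
    have := hJ.encard_le_eRk_of_subset hJF
    rw [← hI.encard_eq_eRk, ← (hF.subset hJF).cast_ncard_eq, ← hIfin.cast_ncard_eq] at this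
    exact_mod_cast this
  rw [mrk, hmax.csSup_eq, hIfin.cast_ncard_eq, hI.encard_eq_eRk]

lemma mrk_le_valSeq {S : List (Set α)} (hS : ProperSeq {C | M.IsCircuit C} S)
    (hfin : (F ∪ unionList S).Finite) : (mrk M F : ℤ) ≤ valSeq F S := by
  have h := (add_le_add_left (M.eRk_mono subset_union_left) _).trans
    (M.eRk_union_unionList_add_length_le hS F)
  rw [← mrk_eq_eRk (hfin.subset subset_union_left), ← hfin.cast_ncard_eq] at h
  rw [valSeq]
  have : mrk M F + S.length ≤ (F ∪ unionList S).ncard := by exact_mod_cast h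
  omega

lemma valX_eq {X : Set (Set α)} {r : ℤ} (hle : ∀ S, ProperSeq X S → r ≤ valSeq F S)
    (hS₀ : ∃ S, ProperSeq X S ∧ valSeq F S ≤ r) : valX X F = r := by
  obtain ⟨S₀, hS₀, hr⟩ := hS₀
  refine IsLeast.csInf_eq ⟨⟨S₀, hS₀, (hr.antisymm (hle S₀ hS₀)).symm⟩, ?_⟩
  rintro _ ⟨S, hS, rfl⟩
  exact hle S hS

end Rank

section Sparse

variable {V : Type*}

/-- `(1,1)`-sparsity, the independence condition of the count matroid `M_{f_{1,1}}`. -/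
def IsSparse (F : Set (Sym2 V)) : Prop :=
  ∀ I ⊆ F, I.Nonempty → (I.ncard : ℤ) ≤ (verts I).ncard - 1

lemma IsSparse.anti {F G : Set (Sym2 V)} (hG : IsSparse G) (hFG : F ⊆ G) : IsSparse F :=
  fun I hIF => hG I (hIF.trans hFG)

lemma mem_verts_of_mem {F : Set (Sym2 V)} {e : Sym2 V} {v : V} (he : e ∈ F) (hv : v ∈ e) :
    v ∈ verts F :=
  ⟨e, he, hv⟩

/-- Orient the edge `s(h v, v)` towards `v`: every vertex is the head of at most one edge, and
the tail of any edge is the head of none, so each nonempty subset of edges has more vertices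
than edges. -/
lemma isSparse_image_of_mapsTo_compl [Finite V] {A : Set V} {h : V → V}
    (hA : MapsTo h A Aᶜ) : IsSparse ((fun v => s(h v, v)) '' A) := by
  intro J hJ ⟨e₀, he₀⟩
  set B := A ∩ (fun v => s(h v, v)) ⁻¹' J
  have hinj : InjOn (fun v => s(h v, v)) A := by
    intro u hu v hv huv
    rcases Sym2.eq_iff.1 huv with ⟨-, h⟩ | ⟨-, rfl⟩
    · exact h
    · exact absurd hu (hA hv)
  have hJB : (fun v => s(h v, v)) '' B = J := by
    rw [image_inter_preimage, inter_eq_right.2 hJ]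
  obtain ⟨b₀, hb₀, rfl⟩ : e₀ ∈ (fun v => s(h v, v)) '' B := hJB ▸ he₀
  have hsub : insert (h b₀) B ⊆ verts J := by
    rintro v (rfl | hv)
    · exact mem_verts_of_mem he₀ (Sym2.mem_mk_left _ _)
    · exact mem_verts_of_mem hv.2 (Sym2.mem_mk_right _ _)
  have hcard := ncard_le_ncard hsub (toFinite _)
  rw [ncard_insert_of_notMem (fun hb => hA hb₀.1 hb.1),
    ← (hinj.mono inter_subset_left).ncard_image, hJB] at hcard
  omega

lemma isSparse_pair [Finite V] {x a b : V} (ha : a ≠ x) (hb : b ≠ x) :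
    IsSparse {s(x, a), s(x, b)} := by
  have := isSparse_image_of_mapsTo_compl (A := {a, b}) (h := fun _ => x)
    (fun v _ => by simp [ha.symm, hb.symm])
  rwa [image_pair] at this

lemma verts_triangle (x y z : V) : verts {s(x, y), s(x, z), s(y, z)} = {x, y, z} := by
  ext v
  simp only [verts, mem_ofPred_eq, mem_insert_iff, mem_singleton_iff, exists_eq_or_imp,
    exists_eq_left, Sym2.mem_iff]
  tauto

lemma ncard_triangle {x y z : V} (hxy : x ≠ y) (hxz : x ≠ z) (hyz : y ≠ z) :
    ({s(x, y), s(x, z), s(y, z)} : Set (Sym2 V)).ncard = 3 := by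
  rw [ncard_insert_of_notMem, ncard_pair] <;> simp [*]

lemma not_isSparse_triangle {x y z : V} (hxy : x ≠ y) (hxz : x ≠ z) (hyz : y ≠ z) :
    ¬ IsSparse {s(x, y), s(x, z), s(y, z)} := by
  intro h
  have := h _ Subset.rfl ⟨s(x, y), mem_insert _ _⟩
  rw [ncard_triangle hxy hxz hyz, verts_triangle, ncard_insert_of_notMem (by simp [hxy, hxz]),
    ncard_pair hyz] at this
  omega

end Sparse

namespace SimpleGraph

variable {V : Type*} (G : SimpleGraph V)

noncomputable def componentRoot (v : V) : V := (G.connectedComponentMk v).out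

lemma reachable_componentRoot (v : V) : G.Reachable v (G.componentRoot v) :=
  ConnectedComponent.exact (Quot.out_eq _).symm

lemma componentRoot_eq_iff {u v : V} : G.componentRoot u = G.componentRoot v ↔ G.Reachable u v :=
  ⟨fun h => (G.reachable_componentRoot u).trans (h ▸ (G.reachable_componentRoot v).symm),
    fun h => congrArg Quot.out (ConnectedComponent.sound h)⟩

@[simp]
lemma componentRoot_componentRoot (v : V) :
    G.componentRoot (G.componentRoot v) = G.componentRoot v :=
  G.componentRoot_eq_iff.2 (G.reachable_componentRoot v).symm

def rootEdges : Set (Sym2 V) :=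
  (fun v => s(G.componentRoot v, v)) '' {v | G.componentRoot v ≠ v}

def nonRootEdges : Set (Sym2 V) :=
  {e | ∃ a b, e = s(a, b) ∧ a ≠ b ∧ G.Reachable a b ∧
    G.componentRoot a ≠ a ∧ G.componentRoot b ≠ b}

/-- For `s(a, b) ∈ G.nonRootEdges` this is the triangle on `a`, `b` and their common root. -/
def rootTriangle (e : Sym2 V) : Set (Sym2 V) :=
  insert e ((fun v => s(G.componentRoot v, v)) '' {v | v ∈ e})

lemma rootEdges_subset_edgeSet : G.rootEdges ⊆ (⊤ : SimpleGraph V).edgeSet := by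
  rintro _ ⟨v, hv, rfl⟩
  simpa using hv

lemma isSparse_rootEdges [Finite V] : IsSparse G.rootEdges :=
  isSparse_image_of_mapsTo_compl fun v _ => by simp

lemma mem_rootEdges_union_nonRootEdges {a b : V} (hab : a ≠ b) (h : G.Reachable a b) :
    s(a, b) ∈ G.rootEdges ∪ G.nonRootEdges := by
  have hroot := G.componentRoot_eq_iff.2 h
  by_cases ha : G.componentRoot a = a
  · refine .inl ⟨b, fun hb => hab ?_, show s(_, b) = _ by rw [← hroot, ha]⟩
    rw [← ha, hroot, hb]
  by_cases hb : G.componentRoot b = b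
  · exact .inl ⟨a, ha, show s(_, a) = _ by rw [hroot, hb, Sym2.eq_swap]⟩
  exact .inr ⟨a, b, rfl, hab, h, ha, hb⟩

lemma disjoint_rootEdges_nonRootEdges : Disjoint G.rootEdges G.nonRootEdges := by
  rw [Set.disjoint_left]
  rintro _ ⟨v, -, rfl⟩ ⟨a, b, he, -, -, ha, hb⟩
  rcases Sym2.eq_iff.1 he with ⟨h, -⟩ | ⟨h, -⟩
  · exact ha (h ▸ G.componentRoot_componentRoot v)
  · exact hb (h ▸ G.componentRoot_componentRoot v)

lemma rootTriangle_subset {e : Sym2 V} (he : e ∈ G.nonRootEdges) :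
    G.rootTriangle e ⊆ insert e G.rootEdges := by
  rintro f (rfl | ⟨v, hv, rfl⟩)
  · exact mem_insert _ _
  · obtain ⟨a, b, rfl, -, -, ha, hb⟩ := he
    exact .inr ⟨v, by rcases Sym2.mem_iff.1 hv with rfl | rfl <;> assumption, rfl⟩

lemma rootTriangle_mem_triangleCopies {n : ℕ} {G : SimpleGraph (Fin n)} {e : Sym2 (Fin n)}
    (he : e ∈ G.nonRootEdges) : G.rootTriangle e ∈ triangleCopies n := by
  obtain ⟨a, b, rfl, hab, h, ha, hb⟩ := he
  have hroot := G.componentRoot_eq_iff.2 h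
  refine ⟨G.componentRoot a, a, b, ha, hroot ▸ hb, hab, ?_⟩
  ext f
  simp only [rootTriangle, Sym2.mem_iff, mem_insert_iff, mem_image, mem_ofPred_eq,
    exists_eq_or_imp, exists_eq_left, hroot, mem_singleton_iff]
  tauto

end SimpleGraph

section K3Matroid

open SimpleGraph

variable {V : Type*}

def IsK3Matroid (N : Matroid (Sym2 V)) : Prop :=
  N.E = (⊤ : SimpleGraph V).edgeSet ∧
    ∀ x y z : V, x ≠ y → x ≠ z → y ≠ z → N.IsCircuit {s(x, y), s(x, z), s(y, z)}

lemma isXMatroid_triangleCopies_iff {n : ℕ} {N : Matroid (Sym2 (Fin n))} :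
    IsXMatroid (⊤ : SimpleGraph (Fin n)).edgeSet (triangleCopies n) N ↔ IsK3Matroid N := by
  simp only [IsXMatroid, IsK3Matroid, Matroid.isCircuit'_iff, triangleCopies]
  refine and_congr_right fun _ => ⟨fun h x y z hxy hxz hyz => h _ ⟨x, y, z, hxy, hxz, hyz, rfl⟩,
    fun h _ ⟨x, y, z, hxy, hxz, hyz, hC⟩ => hC ▸ h x y z hxy hxz hyz⟩

lemma isK3Matroid_of_indep_iff [Finite V] {M : Matroid (Sym2 V)}
    (hME : M.E = (⊤ : SimpleGraph V).edgeSet)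
    (hMI : ∀ F, M.Indep F ↔ F ⊆ (⊤ : SimpleGraph V).edgeSet ∧ IsSparse F) : IsK3Matroid M := by
  refine ⟨hME, fun x y z hxy hxz hyz => ?_⟩
  have hsub : ({s(x, y), s(x, z), s(y, z)} : Set (Sym2 V)) ⊆ (⊤ : SimpleGraph V).edgeSet := by
    simp [insert_subset_iff, hxy, hxz, hyz]
  rw [Matroid.isCircuit_iff_dep_forall_sdiff_singleton_indep, Matroid.dep_iff, hMI, hME]
  refine ⟨⟨fun h => not_isSparse_triangle hxy hxz hyz h.2, hsub⟩, ?_⟩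
  rintro e he
  refine (hMI _).2 ⟨sdiff_subset.trans hsub, ?_⟩
  rcases he with rfl | rfl | rfl
  · exact (isSparse_pair hxz hyz).anti (by rintro f ⟨hf | hf | hf, hne⟩ <;> simp_all)
  · exact (isSparse_pair hxy hyz.symm).anti
      (by rintro f ⟨hf | hf | hf, hne⟩ <;> simp_all [Sym2.eq_swap])
  · exact (isSparse_pair hxy.symm hxz.symm).anti
      (by rintro f ⟨hf | hf | hf, hne⟩ <;> simp_all)

namespace IsK3Matroid

variable {N : Matroid (Sym2 V)} (hN : IsK3Matroid N)
include hN

lemma mem_closure_of_triangle {X : Set (Sym2 V)} {a b c : V} (hab : a ≠ b) (hca : c ≠ a)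
    (hcb : c ≠ b) (ha : s(c, a) ∈ N.closure X) (hb : s(c, b) ∈ N.closure X) :
    s(a, b) ∈ N.closure X := by
  refine N.closure_subset_closure_of_subset_closure ?_
    ((hN.2 c a b hca hcb hab).mem_closure_sdiff_singleton_of_mem (by simp))
  rintro f ⟨hf | hf | hf, hfab⟩ <;> simp_all

lemma mem_closure_of_reachable {X : Set (Sym2 V)} (hX : X ⊆ N.E) {a b : V}
    (h : (fromEdgeSet X).Reachable a b) (hab : a ≠ b) : s(a, b) ∈ N.closure X := by
  obtain ⟨p⟩ := h
  induction p with
  | nil => exact absurd rfl hab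
  | @cons a c b hac p ih =>
    rw [fromEdgeSet_adj] at hac
    rcases eq_or_ne c b with rfl | hcb
    · exact N.subset_closure X hX hac.1
    · refine hN.mem_closure_of_triangle hab hac.2.symm hcb ?_ (ih hcb)
      rw [Sym2.eq_swap]
      exact N.subset_closure X hX hac.1

/-- Every nonempty `J ⊆ I` lies in the closure of a star through `verts J`, so its size is at most
the `|verts J| - 1` edges of that star. -/
lemma isSparse_of_indep [Finite V] {I : Set (Sym2 V)} (hI : N.Indep I) : IsSparse I := by
  rintro J hJI ⟨e, he⟩
  induction e using Sym2.ind with | _ r w => ?_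
  have hr : r ∈ verts J := mem_verts_of_mem he (Sym2.mem_mk_left r w)
  set X := (fun v => s(r, v)) '' (verts J \ {r})
  have hXE : X ⊆ N.E := by
    rintro _ ⟨v, hv, rfl⟩
    simpa [hN.1, eq_comm] using hv.2
  have hreach : ∀ v ∈ verts J, (fromEdgeSet X).Reachable r v := by
    intro v hv
    rcases eq_or_ne v r with rfl | hvr
    · rfl
    · exact Adj.reachable
        ((fromEdgeSet_adj _).2 ⟨⟨v, ⟨hv, hvr⟩, rfl⟩, hvr.symm⟩)
  have hJX : J ⊆ N.closure X := by
    intro f hf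
    induction f using Sym2.ind with | _ a b => ?_
    have hab : a ≠ b := by
      simpa using (hN.1 ▸ hI.subset_ground) (hJI hf)
    exact hN.mem_closure_of_reachable hXE
      ((hreach a (mem_verts_of_mem hf (Sym2.mem_mk_left a b))).symm.trans
        (hreach b (mem_verts_of_mem hf (Sym2.mem_mk_right a b)))) hab
  have hle : J.encard ≤ (verts J \ {r}).encard :=
    ((hI.subset hJI).encard_le_eRk_of_subset_closure hJX).trans
      ((N.eRk_le_encard X).trans (encard_image_le _ _))
  rw [← (toFinite J).cast_ncard_eq, ← (toFinite _).cast_ncard_eq, Nat.cast_le,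
    ncard_sdiff_singleton_of_mem hr] at hle
  have := (ncard_pos (toFinite _)).2 ⟨r, hr⟩
  omega

lemma ncard_rootEdges_le_mrk [Finite V] {F : Set (Sym2 V)} (hF : F ⊆ N.E)
    (hR : N.Indep (fromEdgeSet F).rootEdges) :
    (fromEdgeSet F).rootEdges.ncard ≤ mrk N F := by
  have hcl : (fromEdgeSet F).rootEdges ⊆ N.closure F := by
    rintro _ ⟨v, hv, rfl⟩
    exact hN.mem_closure_of_reachable hF
      ((fromEdgeSet F).reachable_componentRoot v).symm hv
  have := hR.encard_le_eRk_of_subset_closure hcl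
  rwa [← mrk_eq_eRk (toFinite F), ← (toFinite _).cast_ncard_eq, Nat.cast_le] at this

end IsK3Matroid

/-- The root triangles of the non-root edges; each non-root edge lies in its own triangle only. -/
lemma exists_properSeq_valSeq_le_ncard_rootEdges {n : ℕ} {F : Set (Sym2 (Fin n))}
    (hF : F ⊆ (⊤ : SimpleGraph (Fin n)).edgeSet) :
    ∃ S, ProperSeq (triangleCopies n) S ∧
      valSeq F S ≤ (fromEdgeSet F).rootEdges.ncard := by
  set G := fromEdgeSet F
  set l := (toFinite G.nonRootEdges).toFinset.toList
  have hl : ∀ e, e ∈ l ↔ e ∈ G.nonRootEdges := by simp [l]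
  refine ⟨l.map G.rootTriangle, properSeq_map (Finset.nodup_toList _)
    (fun e he => rootTriangle_mem_triangleCopies ((hl e).1 he))
    (fun e he => ⟨e, mem_insert _ _, fun e' he' hee' => ?_⟩), ?_⟩
  · rcases G.rootTriangle_subset ((hl e').1 he') hee' with h | h
    · exact h.symm
    · exact absurd ((hl e).1 he) (Set.disjoint_left.1 G.disjoint_rootEdges_nonRootEdges h)
  have hsub : F ∪ unionList (l.map G.rootTriangle) ⊆ G.rootEdges ∪ G.nonRootEdges := by
    refine union_subset (fun f hf => ?_) fun f hf => ?_
    · induction f using Sym2.ind with | _ a b => ?_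
      have hab : a ≠ b := by simpa using hF hf
      exact G.mem_rootEdges_union_nonRootEdges hab
        ((fromEdgeSet_adj _).2 ⟨hf, hab⟩).reachable
    · obtain ⟨_, hT, hfe⟩ := mem_unionList.1 hf
      obtain ⟨e, he, rfl⟩ := List.mem_map.1 hT
      rcases G.rootTriangle_subset ((hl e).1 he) hfe with rfl | h
      · exact .inr ((hl _).1 he)
      · exact .inl h
  have hlen : l.length = G.nonRootEdges.ncard := by
    rw [Finset.length_toList, ncard_eq_toFinset_card]
  have := (ncard_le_ncard hsub (toFinite _)).trans (ncard_union_le _ _)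
  rw [valSeq, List.length_map, hlen]
  omega

end K3Matroid

theorem cycleMatroid_unique_maximal_K3 (n : ℕ) (M : Matroid (Sym2 (Fin n)))
    (hME : M.E = (⊤ : SimpleGraph (Fin n)).edgeSet)
    (hMI : ∀ F : Set (Sym2 (Fin n)), M.Indep F ↔
      F ⊆ (⊤ : SimpleGraph (Fin n)).edgeSet ∧
      ∀ I ⊆ F, I.Nonempty → (I.ncard : ℤ) ≤ (verts I).ncard - 1) :
    IsXMatroid (⊤ : SimpleGraph (Fin n)).edgeSet (triangleCopies n) M ∧
    (∀ N : Matroid (Sym2 (Fin n)),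
      IsXMatroid (⊤ : SimpleGraph (Fin n)).edgeSet (triangleCopies n) N → WeakLE N M) ∧
    ∀ F ⊆ (⊤ : SimpleGraph (Fin n)).edgeSet, (mrk M F : ℤ) = valX (triangleCopies n) F := by
  have hM : IsK3Matroid M := isK3Matroid_of_indep_iff hME hMI
  refine ⟨isXMatroid_triangleCopies_iff.2 hM, fun N hN I hI => ?_, fun F hF => ?_⟩
  · have hN := isXMatroid_triangleCopies_iff.1 hN
    exact (hMI I).2 ⟨hN.1 ▸ hI.subset_ground, hN.isSparse_of_indep hI⟩
  have htri : triangleCopies n ⊆ {C | M.IsCircuit C} := by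
    rintro _ ⟨x, y, z, hxy, hxz, hyz, rfl⟩
    exact hM.2 x y z hxy hxz hyz
  refine (valX_eq (fun S hS => mrk_le_valSeq (hS.mono htri) (toFinite _)) ?_).symm
  obtain ⟨S, hS, hval⟩ := exists_properSeq_valSeq_le_ncard_rootEdges hF
  have hR := hM.ncard_rootEdges_le_mrk (hME ▸ hF) ((hMI _).2
    ⟨SimpleGraph.rootEdges_subset_edgeSet _, SimpleGraph.isSparse_rootEdges _⟩)
  exact ⟨S, hS, hval.trans (by exact_mod_cast hR)⟩
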